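/- arXiv:1802.09740 — 5 statements merged into one kernel-verified Lean document; each statement's English description precedes it below -/
import Mathlib

section
/- Let N be a positive integer, c a divisor of N, and a, b, d integers with ad - bc = 1. Let h be a positive integer such that N divides c²h. Then for any matrix γ = [[A,B],[C,D]] in SL₂(ℤ) with γ ≡ [[1,*],[0,1]] mod Nh, the conjugate α_h γ α_h⁻¹ lies in Γ₀(N), where α_h = [[ah, b],[ch, d]]. Moreover α_h γ α_h⁻¹ ≡ [[1 - Bach, *],[0, 1 + Bach]] mod N. -/
/-- conjugation of an upper-triangular-unipotent-mod-Nh matrix by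
`α_h = [[ah,b],[ch,d]]` lands in `Γ₀(N)`, with explicit diagonal congruences mod `N`. -/
theorem stmt_0 (N : ℕ) (hN : 0 < N) (c : ℤ) (hc : c ∣ (N : ℤ))
    (a b d : ℤ) (hdet : a * d - b * c = 1)
    (h : ℕ) (hh : 0 < h) (hch : (N : ℤ) ∣ c ^ 2 * h)
    (A B C D : ℤ) (hγdet : A * D - B * C = 1)
    (hA : A ≡ 1 [ZMOD ((N : ℤ) * h)]) (hD : D ≡ 1 [ZMOD ((N : ℤ) * h)])
    (hC : ((N : ℤ) * h) ∣ C) :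
    ∃ M : Matrix (Fin 2) (Fin 2) ℤ,
      M.map ((↑) : ℤ → ℚ) =
        (!![(a : ℚ) * h, b; c * h, d]) * (!![(A : ℚ), B; C, D]) *
          (!![(a : ℚ) * h, b; c * h, d])⁻¹ ∧
      M.det = 1 ∧
      (N : ℤ) ∣ M 1 0 ∧
      M 0 0 ≡ 1 - B * a * c * h [ZMOD (N : ℤ)] ∧
      M 1 1 ≡ 1 + B * a * c * h [ZMOD (N : ℤ)] := by
  obtain ⟨k, hk⟩ := hC
  set C' : ℤ := (N : ℤ) * k with hC'def
  have hCeq : C = h * C' := by rw [hk, hC'def]; ring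
  refine ⟨!![a*d*A + b*d*C' - a*c*h*B - b*c*D, -(a*b)*A - b^2*C' + a^2*h*B + a*b*D;
      c*d*A + d^2*C' - c^2*h*B - c*d*D, -(b*c)*A - b*d*C' + a*c*h*B + a*d*D], ?_, ?_, ?_, ?_, ?_⟩
  · -- map equality
    have hα : IsUnit (!![(a : ℚ) * h, b; c * h, d]).det := by
      rw [Matrix.det_fin_two_of]
      have hdq : ((a : ℚ)*d - b*c) = 1 := by exact_mod_cast hdet
      have : (a : ℚ) * h * d - b * (c * h) = h := by linear_combination (h : ℚ) * hdq
      rw [this]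
      simp [isUnit_iff_ne_zero, hh.ne']
    have hmul : (!![a*d*A + b*d*C' - a*c*h*B - b*c*D, -(a*b)*A - b^2*C' + a^2*h*B + a*b*D;
        c*d*A + d^2*C' - c^2*h*B - c*d*D, -(b*c)*A - b*d*C' + a*c*h*B + a*d*D] :
        Matrix (Fin 2) (Fin 2) ℤ).map ((↑) : ℤ → ℚ) * (!![(a : ℚ) * h, b; c * h, d]) =
        (!![(a : ℚ) * h, b; c * h, d]) * (!![(A : ℚ), B; C, D]) := by
      have hCq : (C : ℚ) = h * C' := by exact_mod_cast hCeq
      have hdq : ((a : ℚ)*d - b*c) = 1 := by exact_mod_cast hdet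
      ext i j
      fin_cases i <;> fin_cases j <;>
          simp [Matrix.mul_apply, Fin.sum_univ_two, hCq, hC'def] <;> push_cast <;>
        first
          | linear_combination ((a:ℚ)*A*h + b*N*k*h) * hdq
          | linear_combination ((a:ℚ)*h*B + b*D) * hdq
          | linear_combination ((c:ℚ)*A*h + d*N*k*h) * hdq
          | linear_combination ((c:ℚ)*h*B + d*D) * hdq
    rw [← hmul, Matrix.mul_nonsing_inv_cancel_right _ _ hα]
  · -- determinant
    rw [Matrix.det_fin_two_of]
    have hγdet' : A * D - B * (h * C') = 1 := by rw [← hCeq]; exact hγdet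
    linear_combination ((a*d - b*c)^2) * hγdet' + (a*d - b*c + 1) * hdet
  · -- lower left divisible by N
    have hAN : ((A : ZMod N)) = ((1 : ℤ) : ZMod N) :=
      (ZMod.intCast_eq_intCast_iff _ _ _).mpr (hA.of_dvd ⟨h, rfl⟩)
    have hDN : ((D : ZMod N)) = ((1 : ℤ) : ZMod N) :=
      (ZMod.intCast_eq_intCast_iff _ _ _).mpr (hD.of_dvd ⟨h, rfl⟩)
    have hC'N : ((C' : ZMod N)) = 0 := by
      rw [hC'def]; push_cast; simp
    have hchN : (((c^2 * h : ℤ) : ZMod N)) = 0 :=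
      (ZMod.intCast_zmod_eq_zero_iff_dvd _ _).mpr hch
    show (N:ℤ) ∣ (c*d*A + d^2*C' - c^2*h*B - c*d*D)
    rw [← ZMod.intCast_zmod_eq_zero_iff_dvd]
    push_cast at hAN hDN hC'N hchN ⊢
    linear_combination (c*d : ZMod N) * hAN - (c*d : ZMod N) * hDN + (d^2 : ZMod N) * hC'N - (B : ZMod N) * hchN
  · have hAN : ((A : ZMod N)) = ((1 : ℤ) : ZMod N) :=
      (ZMod.intCast_eq_intCast_iff _ _ _).mpr (hA.of_dvd ⟨h, rfl⟩)
    have hDN : ((D : ZMod N)) = ((1 : ℤ) : ZMod N) :=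
      (ZMod.intCast_eq_intCast_iff _ _ _).mpr (hD.of_dvd ⟨h, rfl⟩)
    have hC'N : ((C' : ZMod N)) = 0 := by
      rw [hC'def]; push_cast; simp
    show (a*d*A + b*d*C' - a*c*h*B - b*c*D) ≡ 1 - B * a * c * h [ZMOD (N : ℤ)]
    rw [← ZMod.intCast_eq_intCast_iff]
    push_cast at hAN hDN hC'N ⊢
    linear_combination (a*d : ZMod N) * hAN - (b*c : ZMod N) * hDN + (b*d : ZMod N) * hC'N + (by exact_mod_cast congrArg (Int.cast : ℤ → ZMod N) hdet : (a*d - b*c : ZMod N) = 1)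
  · have hAN : ((A : ZMod N)) = ((1 : ℤ) : ZMod N) :=
      (ZMod.intCast_eq_intCast_iff _ _ _).mpr (hA.of_dvd ⟨h, rfl⟩)
    have hDN : ((D : ZMod N)) = ((1 : ℤ) : ZMod N) :=
      (ZMod.intCast_eq_intCast_iff _ _ _).mpr (hD.of_dvd ⟨h, rfl⟩)
    have hC'N : ((C' : ZMod N)) = 0 := by
      rw [hC'def]; push_cast; simp
    show (-(b*c)*A - b*d*C' + a*c*h*B + a*d*D) ≡ 1 + B * a * c * h [ZMOD (N : ℤ)]
    rw [← ZMod.intCast_eq_intCast_iff]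
    push_cast at hAN hDN hC'N ⊢
    linear_combination -(b*c : ZMod N) * hAN + (a*d : ZMod N) * hDN - (b*d : ZMod N) * hC'N + (by exact_mod_cast congrArg (Int.cast : ℤ → ZMod N) hdet : (a*d - b*c : ZMod N) = 1)
end

section
/- Let a, b be multiplicative arithmetic functions (a_{mn} = a_m a_n for gcd(m,n)=1, a_1 = b_1 = 1) with complex values such that a_m = b_m whenever m ≡ 1 (mod N). Let c ∈ (ℤ/Nℤ)× and let H be the subgroup of classes admitting infinitely many pairwise coprime representatives l with a_l ≠ 0. Suppose c ∈ H and l, l' are two integers in the class c with a_l ≠ 0 and a_{l'} ≠ 0. Then b_l / a_l = b_{l'} / a_{l'}. -/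
/-!
Infinitely many pairwise coprime representatives of `c` with `a ≠ 0` let us build `m`, a product of
`orderOf c - 1` of them avoiding the finitely many primes of `l l'`, so that `m ≡ c⁻¹ (mod N)`,
`a m ≠ 0` and `m` is coprime to `l` and `l'`. Since `l m ≡ 1`, multiplicativity gives
`a l a m = b l b m`, i.e. `b l / a l = a m / b m`; the same holds for `l'`.
-/

theorem map_prod_of_pairwise_coprime {M : Type*} [CommMonoid M] (f : ℕ → M) (h1 : f 1 = 1)
    (hmul : ∀ m n : ℕ, Nat.Coprime m n → f (m * n) = f m * f n)
    (t : Finset ℕ) (ht : (t : Set ℕ).Pairwise Nat.Coprime) :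
    f (∏ x ∈ t, x) = ∏ x ∈ t, f x := by
  induction t using Finset.cons_induction with
  | empty => simpa using h1
  | cons x s hx ih =>
    rw [Finset.coe_cons, Set.pairwise_insert_of_symm] at ht
    have hcop : Nat.Coprime x (∏ y ∈ s, y) :=
      Nat.Coprime.prod_right fun y hy ↦ ht.2 y hy (by rintro rfl; exact hx hy)
    rw [Finset.prod_cons, Finset.prod_cons, hmul _ _ hcop, ih ht.1]

theorem Set.Pairwise.subsingleton_setOf_dvd {L : Set ℕ} (hL : L.Pairwise Nat.Coprime) {p : ℕ}
    (hp : p ≠ 1) : {x ∈ L | p ∣ x}.Subsingleton := by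
  rintro x ⟨hxL, hpx⟩ y ⟨hyL, hpy⟩
  by_contra hxy
  exact hp (Nat.eq_one_of_dvd_coprimes (hL hxL hyL hxy) hpx hpy)

theorem Set.Infinite.setOf_coprime {L : Set ℕ} (hinf : L.Infinite)
    (hL : L.Pairwise Nat.Coprime) {n : ℕ} (hn : n ≠ 0) : {x ∈ L | Nat.Coprime x n}.Infinite := by
  have hfin : (⋃ p ∈ n.primeFactors, {x ∈ L | p ∣ x}).Finite :=
    n.primeFactors.finite_toSet.biUnion fun p hp ↦
      (hL.subsingleton_setOf_dvd (Nat.prime_of_mem_primeFactors hp).ne_one).finite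
  refine (hinf.sdiff hfin).mono fun x hx ↦ ⟨hx.1, Nat.coprime_of_dvd fun p hp hpx hpn ↦ ?_⟩
  exact hx.2 (Set.mem_biUnion (Nat.mem_primeFactors.mpr ⟨hp, hpn, hn⟩) ⟨hx.1, hpx⟩)

theorem exists_finset_coprime_prod_mul_eq_one {R : Type*} [CommSemiring R] {c : R}
    (hc : IsOfFinOrder c) {L : Set ℕ} (hinf : L.Infinite) (hL : L.Pairwise Nat.Coprime)
    (hLc : ∀ x ∈ L, (x : R) = c) {n : ℕ} (hn : n ≠ 0) :
    ∃ t : Finset ℕ, ↑t ⊆ L ∧ Nat.Coprime (∏ x ∈ t, x) n ∧ ((∏ x ∈ t, x : ℕ) : R) * c = 1 := by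
  obtain ⟨t, htS, htcard⟩ := (hinf.setOf_coprime hL hn).exists_subset_card_eq (orderOf c - 1)
  refine ⟨t, fun x hx ↦ (htS hx).1, Nat.Coprime.prod_left fun x hx ↦ (htS hx).2, ?_⟩
  rw [Nat.cast_prod, Finset.prod_congr rfl fun x hx ↦ hLc x (htS hx).1, Finset.prod_const,
    htcard, ← pow_succ, Nat.sub_add_cancel hc.orderOf_pos, pow_orderOf_eq_one]

theorem div_eq_div_of_mul_eq_mul {K : Type*} [Field K] {x y u v : K} (h : x * u = y * v)
    (hx : x ≠ 0) (hu : u ≠ 0) : y / x = u / v := by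
  have hv : v ≠ 0 := right_ne_zero_of_mul (h ▸ mul_ne_zero hx hu)
  rw [div_eq_div_iff hx hv]
  linear_combination -h

theorem stmt_5_general (N : ℕ) (a b : ℕ → ℂ)
    (ha1 : a 1 = 1)
    (hamul : ∀ m n : ℕ, Nat.Coprime m n → a (m * n) = a m * a n)
    (hbmul : ∀ m n : ℕ, Nat.Coprime m n → b (m * n) = b m * b n)
    (hab : ∀ m : ℕ, (m : ZMod N) = 1 → a m = b m)
    (c : (ZMod N)ˣ)
    (hcH : ∃ L : Set ℕ, L.Infinite ∧ L.Pairwise Nat.Coprime ∧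
      ∀ l ∈ L, 0 < l ∧ ((l : ZMod N) = (c : ZMod N)) ∧ a l ≠ 0)
    (l l' : ℕ) (hl : 0 < l) (hl' : 0 < l')
    (hlc : (l : ZMod N) = (c : ZMod N)) (hl'c : (l' : ZMod N) = (c : ZMod N))
    (hal : a l ≠ 0) (hal' : a l' ≠ 0) :
    b l / a l = b l' / a l' := by
  obtain ⟨L, hinf, hL, hLmem⟩ := hcH
  obtain ⟨t, htL, hmn, hmc⟩ := exists_finset_coprime_prod_mul_eq_one
    (Units.isOfFinOrder_val.mpr (isOfFinOrder_of_finite c)) hinf hL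
    (fun x hx ↦ (hLmem x hx).2.1) (Nat.mul_ne_zero hl.ne' hl'.ne')
  set m := ∏ x ∈ t, x
  have ham : a m ≠ 0 := by
    rw [map_prod_of_pairwise_coprime a ha1 hamul t (hL.mono htL)]
    exact Finset.prod_ne_zero_iff.mpr fun x hx ↦ (hLmem x (htL hx)).2.2
  have ratio (j : ℕ) (hj : j ∣ l * l') (hjc : (j : ZMod N) = c) (haj : a j ≠ 0) :
      b j / a j = a m / b m := by
    have hjm : Nat.Coprime j m := (hmn.coprime_dvd_right hj).symm
    have h := hab (j * m) (by rw [Nat.cast_mul, hjc, mul_comm, hmc])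
    rw [hamul _ _ hjm, hbmul _ _ hjm] at h
    exact div_eq_div_of_mul_eq_mul h haj ham
  exact (ratio l (dvd_mul_right l l') hlc hal).trans (ratio l' (dvd_mul_left l' l) hl'c hal').symm

/-- the ratio `b l / a l` is independent of the representative `l`
of a class `c ∈ H` with `a l ≠ 0`. -/
theorem stmt_5 (N : ℕ) (hN : 0 < N) (a b : ℕ → ℂ)
    (ha1 : a 1 = 1) (hb1 : b 1 = 1)
    (hamul : ∀ m n : ℕ, Nat.Coprime m n → a (m * n) = a m * a n)
    (hbmul : ∀ m n : ℕ, Nat.Coprime m n → b (m * n) = b m * b n)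
    (hab : ∀ m : ℕ, (m : ZMod N) = 1 → a m = b m)
    (c : (ZMod N)ˣ)
    (hcH : ∃ L : Set ℕ, L.Infinite ∧ L.Pairwise Nat.Coprime ∧
      ∀ l ∈ L, 0 < l ∧ ((l : ZMod N) = (c : ZMod N)) ∧ a l ≠ 0)
    (l l' : ℕ) (hl : 0 < l) (hl' : 0 < l')
    (hlc : (l : ZMod N) = (c : ZMod N)) (hl'c : (l' : ZMod N) = (c : ZMod N))
    (hal : a l ≠ 0) (hal' : a l' ≠ 0) :
    b l / a l = b l' / a l' :=
  stmt_5_general N a b ha1 hamul hbmul hab c hcH l l' hl hl' hlc hl'c hal hal'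
end

section
/- Let N be a positive integer, a/c a cusp with c | N and gcd(a,c)=1, and factor N = c₀·d₀ where c₀ has the same prime divisors as c and gcd(c₀,d₀)=1. Choose α₁ = [[a,b],[c,d]] ∈ SL₂(ℤ) with d₀ | d. Let h be a positive integer with N | c²h, and set α_h = α₁·[[h,0],[0,1]]. Then for any γ = [[A,B],[C,D]] ∈ SL₂(ℤ) with Nh_c | C (where h = h_c·h_d, h_c | c₀, h_d | d₀) and (A - D)·c ≡ 0 (mod c₀), the matrix α_h γ α_h⁻¹ has integer entries and lies in Γ₀(N). In particular its lower-left entry −Bc²h + (A−D)cd + Cd²/h is an integer divisible by N. -/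
/-!
Since `α_h = α₁ · diag(h, 1)` and `h ∣ C`, writing `C = h k` gives
`α_h γ α_h⁻¹ = α₁ [[A, hB], [k, D]] α₁⁻¹`, and `α₁⁻¹ = [[d, -b], [-c, a]]` because `det α₁ = 1`;
so the conjugate is an integral matrix of determinant `AD - BC = 1`. Its lower-left entry is
`-Bc²h + (A - D)cd + kd²`, whose three terms are divisible by `N` because `N ∣ c²h`,
`N = c₀d₀ ∣ (A - D)c · d`, and `N ∣ h_d k ∣ kd²` (cancel `h_c` in `N h_c ∣ C = h_c h_d k`).
-/

open Matrix

section

variable {R : Type*} [CommRing R]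

lemma diag_mul_eq_mul_diag (h A B k D : R) :
    !![h, 0; 0, 1] * !![A, B; h * k, D] = !![A, h * B; k, D] * !![h, 0; 0, 1] := by
  ext i j; fin_cases i <;> fin_cases j <;> simp [mul_comm]

lemma mul_eq_conj_mul {a b c d : R} (hdet : a * d - b * c = 1) (h A B k D : R) :
    !![a * h, b; c * h, d] * !![A, B; h * k, D] =
      !![a, b; c, d] * !![A, h * B; k, D] * !![d, -b; -c, a] * !![a * h, b; c * h, d] := by
  have hfac : !![a * h, b; c * h, d] = !![a, b; c, d] * !![h, 0; 0, 1] := by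
    ext i j; fin_cases i <;> fin_cases j <;> simp
  have hinv : !![d, -b; -c, a] * !![a, b; c, d] = 1 := by
    rw [← adjugate_fin_two_of, adjugate_mul, det_fin_two_of, hdet, one_smul]
  rw [hfac, Matrix.mul_assoc, diag_mul_eq_mul_diag, Matrix.mul_assoc _ !![d, -b; -c, a],
    ← Matrix.mul_assoc !![d, -b; -c, a], hinv, Matrix.one_mul, ← Matrix.mul_assoc]

end

lemma dvd_conj_lower_left {N c₀ d₀ c d h h_c h_d k A B D : ℤ} (hfact : N = c₀ * d₀)
    (hd₀d : d₀ ∣ d) (hw : N ∣ c ^ 2 * h) (hhc : h_c ≠ 0) (hhd : h_d ∣ d₀)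
    (hC : N * h_c ∣ h_c * h_d * k) (hAD : c₀ ∣ (A - D) * c) :
    N ∣ -B * c ^ 2 * h + (A - D) * c * d + k * d ^ 2 := by
  have hB : N ∣ -B * c ^ 2 * h := by
    rw [mul_assoc]; exact dvd_mul_of_dvd_right hw _
  have hAD' : N ∣ (A - D) * c * d := hfact ▸ mul_dvd_mul hAD hd₀d
  have hk : N ∣ h_d * k := by
    rw [mul_comm N, mul_assoc] at hC; exact (mul_dvd_mul_iff_left hhc).mp hC
  have hk' : N ∣ k * d ^ 2 := hk.trans <| by
    rw [mul_comm]
    exact mul_dvd_mul_left k ((hhd.trans hd₀d).trans (dvd_pow_self d two_ne_zero))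
  exact (hB.add hAD').add hk'

theorem stmt_11_general (N : ℕ) (c₀ d₀ c a b d : ℤ)
    (hfact : (N : ℤ) = c₀ * d₀)
    (hdet : a * d - b * c = 1) (hd₀d : d₀ ∣ d)
    (h h_c h_d : ℕ) (hh : 0 < h) (hw : (N : ℤ) ∣ c ^ 2 * h)
    (hhfact : (h : ℤ) = h_c * h_d) (hhd : (h_d : ℤ) ∣ d₀)
    (A B C D : ℤ) (hγdet : A * D - B * C = 1)
    (hC : ((N : ℤ) * h_c) ∣ C) (hAD : c₀ ∣ (A - D) * c) :
    ∃ M : Matrix (Fin 2) (Fin 2) ℤ,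
      M.map ((↑) : ℤ → ℚ) =
        (!![(a : ℚ) * h, b; c * h, d]) * (!![(A : ℚ), B; C, D]) *
          (!![(a : ℚ) * h, b; c * h, d])⁻¹ ∧
      M.det = 1 ∧
      (h : ℤ) * M 1 0 = -B * c ^ 2 * h ^ 2 + (A - D) * c * d * h + C * d ^ 2 ∧
      (N : ℤ) ∣ M 1 0 := by
  obtain ⟨k, rfl⟩ : (h : ℤ) ∣ C := by
    rw [hhfact]
    exact (mul_dvd_mul_left _ (hfact ▸ dvd_mul_of_dvd_right hhd c₀)).trans
      (mul_comm (N : ℤ) h_c ▸ hC)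
  have hdetQ : (a : ℚ) * d - b * c = 1 := by exact_mod_cast hdet
  set M := !![a, b; c, d] * !![A, h * B; k, D] * !![d, -b; -c, a]
  have hM10 : M 1 0 = -B * c ^ 2 * h + (A - D) * c * d + k * d ^ 2 := by
    simp [M]; ring
  have hMQ : M.map ((↑) : ℤ → ℚ) =
      !![(a : ℚ), b; c, d] * !![(A : ℚ), h * B; k, D] * !![(d : ℚ), -b; -c, a] := by
    ext i j; fin_cases i <;> fin_cases j <;> simp [M]
  have hαdet : (!![(a : ℚ) * h, b; c * h, d]).det = h := by
    rw [det_fin_two_of]; linear_combination (h : ℚ) * hdetQ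
  have : Invertible (!![(a : ℚ) * h, b; c * h, d]) :=
    invertibleOfIsUnitDet _ (by rw [hαdet]; exact (Nat.cast_ne_zero.mpr hh.ne').isUnit)
  refine ⟨M, ?_, ?_, ?_, ?_⟩
  · rw [eq_comm, mul_inv_eq_iff_eq_mul_of_invertible, hMQ, ← mul_eq_conj_mul hdetQ]
    push_cast; rfl
  · simp only [M, det_mul, det_fin_two_of]
    linear_combination (a * d - b * c + 1) * (A * D - B * h * k) * hdet + hγdet
  · rw [hM10]; ring
  · have hh_c : (h_c : ℤ) ≠ 0 := left_ne_zero_of_mul (hhfact ▸ Nat.cast_ne_zero.mpr hh.ne')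
    rw [hM10]
    exact dvd_conj_lower_left hfact hd₀d hw hh_c hhd (hhfact ▸ hC) hAD

/-- with a well-chosen matrix `α₁` (lower-right entry divisible by
the prime-to-`c` part `d₀` of `N`), conjugation of suitable `γ` by `α_h` lands
in `Γ₀(N)`, with lower-left entry `−Bc²h + (A−D)cd + Cd²/h` divisible by `N`. -/
theorem stmt_11 (N : ℕ) (hN : 0 < N) (c₀ d₀ c a b d : ℤ)
    (hfact : (N : ℤ) = c₀ * d₀) (hcop : IsCoprime c₀ d₀)
    (hcN : c ∣ (N : ℤ)) (hsameprimes : ∀ p : ℤ, Prime p → (p ∣ c₀ ↔ p ∣ c))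
    (hdet : a * d - b * c = 1) (hd₀d : d₀ ∣ d)
    (h h_c h_d : ℕ) (hh : 0 < h) (hw : (N : ℤ) ∣ c ^ 2 * h)
    (hhfact : (h : ℤ) = h_c * h_d) (hhc : (h_c : ℤ) ∣ c₀) (hhd : (h_d : ℤ) ∣ d₀)
    (A B C D : ℤ) (hγdet : A * D - B * C = 1)
    (hC : ((N : ℤ) * h_c) ∣ C) (hAD : c₀ ∣ (A - D) * c) :
    ∃ M : Matrix (Fin 2) (Fin 2) ℤ,
      M.map ((↑) : ℤ → ℚ) =
        (!![(a : ℚ) * h, b; c * h, d]) * (!![(A : ℚ), B; C, D]) *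
          (!![(a : ℚ) * h, b; c * h, d])⁻¹ ∧
      M.det = 1 ∧
      (h : ℤ) * M 1 0 = -B * c ^ 2 * h ^ 2 + (A - D) * c * d * h + C * d ^ 2 ∧
      (N : ℤ) ∣ M 1 0 :=
  stmt_11_general N c₀ d₀ c a b d hfact hdet hd₀d h h_c h_d hh hw hhfact hhd A B C D hγdet hC hAD
end

section
/- Let f, g : ℕ → ℂ be multiplicative arithmetic functions (f(1)=g(1)=1, f(mn)=f(m)f(n) for coprime m,n) agreeing on all arguments ≡ 1 mod N, and suppose additionally that for every c ∈ (ℤ/Nℤ)× there exist infinitely many pairwise coprime integers l ≡ c mod N with f(l) ≠ 0. Then there exists a Dirichlet character μ mod N (a homomorphism (ℤ/Nℤ)× → ℂ× extended by zero) such that g(p) = μ(p)·f(p) for every prime p not dividing N. -/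
/-- Auxiliary: from an infinite pairwise-coprime family of representatives of `c`
with nonzero `f`-value, we can find one coprime to any given positive `n`. -/
lemma stmt13_aux (N : ℕ) (f : ℕ → ℂ)
    (hnonvanish : ∀ c : (ZMod N)ˣ, ∃ L : Set ℕ, L.Infinite ∧
      L.Pairwise Nat.Coprime ∧ ∀ l ∈ L, 0 < l ∧ ((l : ZMod N) = (c : ZMod N)) ∧ f l ≠ 0)
    (c : (ZMod N)ˣ) (n : ℕ) (hn : 0 < n) :
    ∃ l : ℕ, 0 < l ∧ ((l : ZMod N) = (c : ZMod N)) ∧ f l ≠ 0 ∧ Nat.Coprime l n := by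
  obtain ⟨L, hLinf, hLcop, hLmem⟩ := hnonvanish c
  have hBfin : {l ∈ L | ¬ Nat.Coprime l n}.Finite := by
    apply Set.Finite.of_finite_image (f := fun l => (Nat.gcd l n).minFac)
    · apply Set.Finite.subset n.primeFactors.finite_toSet
      rintro q ⟨l, ⟨hlL, hlc⟩, rfl⟩
      have hg1 : Nat.gcd l n ≠ 1 := hlc
      have hp : (Nat.gcd l n).minFac.Prime := Nat.minFac_prime hg1
      have hd : (Nat.gcd l n).minFac ∣ n := (Nat.minFac_dvd _).trans (Nat.gcd_dvd_right l n)
      simp [Nat.mem_primeFactors, hp, hd, hn.ne']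
    · rintro l₁ ⟨h1L, h1c⟩ l₂ ⟨h2L, h2c⟩ he
      by_contra hne
      have hcop := hLcop h1L h2L hne
      have hp : (Nat.gcd l₁ n).minFac.Prime := Nat.minFac_prime h1c
      have hd1 : (Nat.gcd l₁ n).minFac ∣ l₁ := (Nat.minFac_dvd _).trans (Nat.gcd_dvd_left l₁ n)
      have he' : (Nat.gcd l₁ n).minFac = (Nat.gcd l₂ n).minFac := he
      have hd2 : (Nat.gcd l₁ n).minFac ∣ l₂ := by
        rw [he']; exact (Nat.minFac_dvd _).trans (Nat.gcd_dvd_left l₂ n)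
      have : (Nat.gcd l₁ n).minFac ∣ 1 := hcop ▸ Nat.dvd_gcd hd1 hd2
      exact Nat.Prime.one_lt (Nat.dvd_one.mp this ▸ hp) |>.ne rfl
  obtain ⟨l, hl⟩ := (hLinf.diff hBfin).nonempty
  obtain ⟨hlL, hlB⟩ := hl
  obtain ⟨hpos, hcast, hne⟩ := hLmem l hlL
  refine ⟨l, hpos, hcast, hne, ?_⟩
  by_contra h
  exact hlB ⟨hlL, h⟩

/-- two multiplicative functions agreeing on arguments `≡ 1 mod N`,
with every class having infinitely many pairwise coprime representatives of
nonzero `f`-value, differ at primes `p ∤ N` by a Dirichlet character mod `N`. -/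
theorem stmt_13 (N : ℕ) (hN : 0 < N) (f g : ℕ → ℂ)
    (hf1 : f 1 = 1) (hg1 : g 1 = 1)
    (hfmul : ∀ m n : ℕ, Nat.Coprime m n → f (m * n) = f m * f n)
    (hgmul : ∀ m n : ℕ, Nat.Coprime m n → g (m * n) = g m * g n)
    (hfg : ∀ m : ℕ, (m : ZMod N) = 1 → f m = g m)
    (hnonvanish : ∀ c : (ZMod N)ˣ, ∃ L : Set ℕ, L.Infinite ∧
      L.Pairwise Nat.Coprime ∧ ∀ l ∈ L, 0 < l ∧ ((l : ZMod N) = (c : ZMod N)) ∧ f l ≠ 0) :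
    ∃ μ : DirichletCharacter ℂ N,
      ∀ p : ℕ, p.Prime → ¬ (p ∣ N) → g p = μ (p : ZMod N) * f p := by
  have hA := stmt13_aux N f hnonvanish
  -- a canonical representative for each class
  choose rep hrpos hrcast hrne hrcop using hA
  set μ₀ : (ZMod N)ˣ → ℂ := fun c => g (rep c 1 one_pos) / f (rep c 1 one_pos) with hμ₀def
  -- the basic functional equation
  have key0 : ∀ (c : (ZMod N)ˣ) (l m : ℕ), ((l : ZMod N) = (c : ZMod N)) →
      ((m : ZMod N) = ((c⁻¹ : (ZMod N)ˣ) : ZMod N)) → Nat.Coprime l m →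
      f l * f m = g l * g m := by
    intro c l m hlc hmc hcop
    have h1 : ((l * m : ℕ) : ZMod N) = 1 := by
      push_cast
      rw [hlc, hmc, ← Units.val_mul, mul_inv_cancel, Units.val_one]
    have := hfg (l * m) h1
    rwa [hfmul l m hcop, hgmul l m hcop] at this
  -- well-definedness: μ₀ c works for every representative
  have key : ∀ (c : (ZMod N)ˣ) (l : ℕ), 0 < l → ((l : ZMod N) = (c : ZMod N)) →
      f l ≠ 0 → g l = μ₀ c * f l := by
    intro c l hl hlc hfl
    set l₀ := rep c 1 one_pos with hl₀
    have hl₀pos : 0 < l₀ := hrpos c 1 one_pos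
    have hl₀cast := hrcast c 1 one_pos
    have hl₀ne := hrne c 1 one_pos
    obtain ⟨m, hmpos, hmcast, hmne, hmcop⟩ := stmt13_aux N f hnonvanish c⁻¹ (l₀ * l)
      (by positivity)
    have hcop1 : Nat.Coprime l₀ m :=
      (Nat.Coprime.coprime_dvd_right (dvd_mul_right l₀ l) hmcop).symm
    have hcop2 : Nat.Coprime l m :=
      (Nat.Coprime.coprime_dvd_right (dvd_mul_left l l₀) hmcop).symm
    have e1 := key0 c l₀ m hl₀cast hmcast hcop1
    have e2 := key0 c l m hlc hmcast hcop2
    have hgm : g m ≠ 0 := by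
      intro h
      rw [h, mul_zero] at e1
      exact (mul_ne_zero hl₀ne hmne) e1
    have hgl₀ : g l₀ ≠ 0 := by
      intro h
      rw [h, zero_mul] at e1
      exact (mul_ne_zero hl₀ne hmne) e1
    have main : g l * f l₀ * g m = g l₀ * f l * g m := by
      calc g l * f l₀ * g m = (g l * g m) * f l₀ := by ring
        _ = (f l * f m) * f l₀ := by rw [e2]
        _ = (f l₀ * f m) * f l := by ring
        _ = (g l₀ * g m) * f l := by rw [e1]
        _ = g l₀ * f l * g m := by ring
    have main2 : g l * f l₀ = g l₀ * f l := mul_right_cancel₀ hgm main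
    rw [hμ₀def]
    field_simp
    linear_combination main2
  have hne : ∀ c, μ₀ c ≠ 0 := by
    intro c
    set l₀ := rep c 1 one_pos with hl₀
    have hl₀pos : 0 < l₀ := hrpos c 1 one_pos
    have hl₀cast := hrcast c 1 one_pos
    have hl₀ne := hrne c 1 one_pos
    obtain ⟨m, hmpos, hmcast, hmne, hmcop⟩ := stmt13_aux N f hnonvanish c⁻¹ l₀ hl₀pos
    have e1 := key0 c l₀ m hl₀cast hmcast hmcop.symm
    have hgl₀ : g l₀ ≠ 0 := by
      intro h
      rw [h, zero_mul] at e1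
      exact (mul_ne_zero hl₀ne hmne) e1
    exact div_ne_zero hgl₀ hl₀ne
  have h1 : μ₀ 1 = 1 := by
    have := key 1 1 one_pos (by simp) (by rw [hf1]; exact one_ne_zero)
    rw [hg1, hf1, mul_one] at this
    exact this.symm
  have hmul : ∀ c₁ c₂, μ₀ (c₁ * c₂) = μ₀ c₁ * μ₀ c₂ := by
    intro c₁ c₂
    set l₁ := rep c₁ 1 one_pos with hl₁
    have h1pos : 0 < l₁ := hrpos c₁ 1 one_pos
    have h1cast := hrcast c₁ 1 one_pos
    have h1ne := hrne c₁ 1 one_pos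
    obtain ⟨l₂, h2pos, h2cast, h2ne, h2cop⟩ := stmt13_aux N f hnonvanish c₂ l₁ h1pos
    have hcop : Nat.Coprime l₁ l₂ := h2cop.symm
    have hc : ((l₁ * l₂ : ℕ) : ZMod N) = ((c₁ * c₂ : (ZMod N)ˣ) : ZMod N) := by
      push_cast
      rw [h1cast, h2cast]
    have hfll : f (l₁ * l₂) ≠ 0 := by
      rw [hfmul _ _ hcop]; exact mul_ne_zero h1ne h2ne
    have e := key (c₁ * c₂) (l₁ * l₂) (by positivity) hc hfll
    rw [hgmul _ _ hcop, key c₁ l₁ h1pos h1cast h1ne, key c₂ l₂ h2pos h2cast h2ne,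
      hfmul _ _ hcop] at e
    have : μ₀ c₁ * μ₀ c₂ * (f l₁ * f l₂) = μ₀ (c₁ * c₂) * (f l₁ * f l₂) := by
      linear_combination e
    exact (mul_right_cancel₀ (mul_ne_zero h1ne h2ne) this).symm
  let μu : (ZMod N)ˣ →* ℂˣ :=
    { toFun := fun c => Units.mk0 (μ₀ c) (hne c)
      map_one' := by ext; simpa using h1
      map_mul' := by intro a b; ext; simpa using hmul a b }
  refine ⟨MulChar.ofUnitHom μu, ?_⟩
  intro p hp hpN
  have hcop : Nat.Coprime p N := (Nat.Prime.coprime_iff_not_dvd hp).mpr hpN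
  set u := ZMod.unitOfCoprime p hcop with hu
  have huv : ((u : (ZMod N)ˣ) : ZMod N) = (p : ZMod N) := ZMod.coe_unitOfCoprime p hcop
  have hμp : MulChar.ofUnitHom μu ((p : ℕ) : ZMod N) = μ₀ u := by
    rw [← huv, MulChar.ofUnitHom_coe]
    rfl
  rw [hμp]
  by_cases hfp : f p = 0
  · obtain ⟨m, hmpos, hmcast, hmne, hmcop⟩ := stmt13_aux N f hnonvanish u⁻¹ p hp.pos
    have hcoppm : Nat.Coprime p m := hmcop.symm
    have h1' : ((p * m : ℕ) : ZMod N) = 1 := by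
      push_cast
      rw [← huv, hmcast, ← Units.val_mul, mul_inv_cancel, Units.val_one]
    have e := hfg (p * m) h1'
    rw [hfmul _ _ hcoppm, hgmul _ _ hcoppm, hfp, zero_mul] at e
    have hgm : g m ≠ 0 := by
      rw [key u⁻¹ m hmpos hmcast hmne]
      exact mul_ne_zero (hne _) hmne
    have hgp : g p = 0 := by
      rcases mul_eq_zero.mp e.symm with h | h
      · exact h
      · exact absurd h hgm
    rw [hgp, hfp, mul_zero]
  · exact key u p hp.pos (by rw [huv]) hfp
end

section
/- Let f : ℕ → ℂ be multiplicative with f(1) = 1, agreeing with g : ℕ → ℂ multiplicative on arguments ≡ 1 (mod N). Let H ≤ (ℤ/Nℤ)× be the subgroup of classes with infinitely many pairwise coprime representatives l having f(l) ≠ 0, and let μ : H → ℂ× be defined by μ(c) = g(l)/f(l) for any representative l of c with f(l) ≠ 0 (well-defined by the earlier step). Then μ is a group homomorphism: μ(cc') = μ(c)μ(c') for all c, c' ∈ H. -/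
private lemma stmt19_good_infinite (L : Set ℕ) (hinf : L.Infinite)
    (hpair : L.Pairwise Nat.Coprime) (M : ℕ) (hM : 0 < M) :
    {x | x ∈ L ∧ Nat.Coprime x M}.Infinite := by
  have hbad : {x | x ∈ L ∧ ¬ Nat.Coprime x M}.Finite := by
    have himg : ((fun x => (Nat.gcd x M).minFac) '' {x | x ∈ L ∧ ¬ Nat.Coprime x M}).Finite := by
      apply Set.Finite.subset (M.divisors : Finset ℕ).finite_toSet
      rintro p ⟨x, ⟨_, hx⟩, rfl⟩
      have hg0 : Nat.gcd x M ≠ 1 := hx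
      have hdvd : (Nat.gcd x M).minFac ∣ M :=
        ((Nat.gcd x M).minFac_dvd).trans (Nat.gcd_dvd_right x M)
      simp [Nat.mem_divisors, hdvd, hM.ne']
    apply Set.Finite.of_finite_image himg
    rintro x ⟨hxL, hx⟩ y ⟨hyL, hy⟩ hxy
    by_contra hne
    have hp : ((Nat.gcd x M).minFac).Prime := Nat.minFac_prime hx
    have hdx : (Nat.gcd x M).minFac ∣ x :=
      ((Nat.gcd x M).minFac_dvd).trans (Nat.gcd_dvd_left x M)
    have hxy' : (Nat.gcd x M).minFac = (Nat.gcd y M).minFac := hxy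
    have hdy : (Nat.gcd x M).minFac ∣ y := by
      rw [hxy']; exact ((Nat.gcd y M).minFac_dvd).trans (Nat.gcd_dvd_left y M)
    have := Nat.Coprime.eq_one_of_dvd ((hpair hxL hyL hne).coprime_dvd_left hdx) hdy
    exact hp.one_lt.ne' this
  have : {x | x ∈ L ∧ Nat.Coprime x M} = L \ {x | x ∈ L ∧ ¬ Nat.Coprime x M} := by
    ext x; by_cases h : x ∈ L <;> simp [h]
  rw [this]
  exact hinf.diff hbad

private lemma stmt19_fprod (f : ℕ → ℂ) (hf1 : f 1 = 1)
    (hfmul : ∀ m n : ℕ, Nat.Coprime m n → f (m * n) = f m * f n)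
    (t : Finset ℕ) (h : (↑t : Set ℕ).Pairwise Nat.Coprime) :
    f (∏ x ∈ t, x) = ∏ x ∈ t, f x := by
  induction t using Finset.cons_induction with
  | empty => simpa using hf1
  | cons a s ha ih =>
    rw [Finset.prod_cons, Finset.prod_cons, hfmul, ih]
    · exact h.mono (by simp [Set.subset_def]; tauto)
    · exact Nat.Coprime.prod_right fun i hi =>
        h (by simp) (by simp [hi]) (fun hai => ha (hai ▸ hi))

private lemma stmt19_exists_inv_rep (N : ℕ) (hN : 0 < N) (f : ℕ → ℂ) (hf1 : f 1 = 1)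
    (hfmul : ∀ m n : ℕ, Nat.Coprime m n → f (m * n) = f m * f n)
    (c : (ZMod N)ˣ)
    (hcH : ∃ L : Set ℕ, L.Infinite ∧ L.Pairwise Nat.Coprime ∧
      ∀ l ∈ L, 0 < l ∧ ((l : ZMod N) = (c : ZMod N)) ∧ f l ≠ 0)
    (M : ℕ) (hM : 0 < M) :
    ∃ n : ℕ, 0 < n ∧ Nat.Coprime n M ∧
      ((n : ZMod N) = ((c⁻¹ : (ZMod N)ˣ) : ZMod N)) ∧ f n ≠ 0 := by
  haveI : NeZero N := ⟨hN.ne'⟩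
  obtain ⟨L, hLinf, hLpair, hLmem⟩ := hcH
  set k := orderOf c with hk
  have hkpos : 0 < k := orderOf_pos c
  have hgood := stmt19_good_infinite L hLinf hLpair M hM
  obtain ⟨t, htsub, htcard⟩ := hgood.exists_subset_card_eq (k - 1)
  refine ⟨∏ x ∈ t, x, ?_, ?_, ?_, ?_⟩
  · exact Finset.prod_pos fun x hx => (hLmem x (htsub hx).1).1
  · exact Nat.Coprime.prod_left fun x hx => (htsub hx).2
  · have hcast : ((∏ x ∈ t, x : ℕ) : ZMod N) = (c : ZMod N) ^ (k - 1) := by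
      push_cast
      rw [Finset.prod_congr rfl fun x hx => (hLmem x (htsub hx).1).2.1,
        Finset.prod_const, htcard]
    rw [hcast]
    have hinv : c ^ (k - 1) = c⁻¹ := by
      apply eq_inv_of_mul_eq_one_left
      rw [← pow_succ, Nat.sub_add_cancel hkpos]
      exact pow_orderOf_eq_one c
    rw [← hinv]
    exact (Units.val_pow_eq_pow_val c (k - 1)).symm
  · rw [stmt19_fprod f hf1 hfmul t (hLpair.mono (fun x hx => (htsub hx).1))]
    exact Finset.prod_ne_zero_iff.mpr fun x hx => (hLmem x (htsub hx).1).2.2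

/-- the ratio `μ(c) = g(l)/f(l)` is multiplicative:
`μ(cc') = μ(c)μ(c')`, expressed via arbitrary representatives with nonzero `f`. -/
theorem stmt_19 (N : ℕ) (hN : 0 < N) (f g : ℕ → ℂ)
    (hf1 : f 1 = 1) (hg1 : g 1 = 1)
    (hfmul : ∀ m n : ℕ, Nat.Coprime m n → f (m * n) = f m * f n)
    (hgmul : ∀ m n : ℕ, Nat.Coprime m n → g (m * n) = g m * g n)
    (hfg : ∀ m : ℕ, (m : ZMod N) = 1 → f m = g m)
    (c c' : (ZMod N)ˣ)
    (hcH : ∃ L : Set ℕ, L.Infinite ∧ L.Pairwise Nat.Coprime ∧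
      ∀ l ∈ L, 0 < l ∧ ((l : ZMod N) = (c : ZMod N)) ∧ f l ≠ 0)
    (hc'H : ∃ L : Set ℕ, L.Infinite ∧ L.Pairwise Nat.Coprime ∧
      ∀ l ∈ L, 0 < l ∧ ((l : ZMod N) = (c' : ZMod N)) ∧ f l ≠ 0)
    (l l' l'' : ℕ) (hl : 0 < l) (hl' : 0 < l') (hl'' : 0 < l'')
    (hlc : (l : ZMod N) = (c : ZMod N)) (hl'c : (l' : ZMod N) = (c' : ZMod N))
    (hl''c : (l'' : ZMod N) = ((c * c' : (ZMod N)ˣ) : ZMod N))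
    (hfl : f l ≠ 0) (hfl' : f l' ≠ 0) (hfl'' : f l'' ≠ 0) :
    g l'' / f l'' = (g l / f l) * (g l' / f l') := by
  -- split coprimality of products
  have hsplit : ∀ a b x : ℕ, Nat.Coprime x (a * b) → Nat.Coprime x a ∧ Nat.Coprime x b :=
    fun a b x h => ⟨Nat.Coprime.coprime_dvd_right (dvd_mul_right a b) h,
      Nat.Coprime.coprime_dvd_right (dvd_mul_left b a) h⟩
  have hunit : ∀ u : (ZMod N)ˣ, (u : ZMod N) * ((u⁻¹ : (ZMod N)ˣ) : ZMod N) = 1 := by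
    intro u; rw [← Units.val_mul]; simp
  have key : ∀ a b : ℕ, Nat.Coprime a b → ((a * b : ℕ) : ZMod N) = 1 →
      f a * f b = g a * g b := by
    intro a b hco h1
    rw [← hfmul a b hco, ← hgmul a b hco, hfg _ h1]
  -- choose m' representing c', coprime to l, l', l''
  obtain ⟨L', hL'inf, hL'pair, hL'mem⟩ := hc'H
  obtain ⟨m', hm'L, hm'M⟩ :=
    (stmt19_good_infinite L' hL'inf hL'pair (l * (l' * l''))
      (Nat.mul_pos hl (Nat.mul_pos hl' hl''))).nonempty
  obtain ⟨hm'pos, hm'c, hfm'⟩ := hL'mem m' hm'L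
  obtain ⟨hm'l, hm'rest⟩ := hsplit _ _ _ hm'M
  obtain ⟨hm'l', hm'l''⟩ := hsplit _ _ _ hm'rest
  -- inverse representatives
  obtain ⟨n₁, hn₁pos, hn₁M, hn₁c, hfn₁⟩ :=
    stmt19_exists_inv_rep N hN f hf1 hfmul c hcH ((l * m') * l'')
      (Nat.mul_pos (Nat.mul_pos hl hm'pos) hl'')
  obtain ⟨n₂, hn₂pos, hn₂M, hn₂c, hfn₂⟩ :=
    stmt19_exists_inv_rep N hN f hf1 hfmul c' ⟨L', hL'inf, hL'pair, hL'mem⟩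
      (((l * m') * l'') * n₁)
      (Nat.mul_pos (Nat.mul_pos (Nat.mul_pos hl hm'pos) hl'') hn₁pos)
  obtain ⟨n₃, hn₃pos, hn₃M, hn₃c, hfn₃⟩ :=
    stmt19_exists_inv_rep N hN f hf1 hfmul c' ⟨L', hL'inf, hL'pair, hL'mem⟩
      (l' * m') (Nat.mul_pos hl' hm'pos)
  obtain ⟨hn₁lm', hn₁l''⟩ := hsplit _ _ _ hn₁M
  obtain ⟨hn₂rest, hn₂n₁⟩ := hsplit _ _ _ hn₂M
  obtain ⟨hn₂lm', hn₂l''⟩ := hsplit _ _ _ hn₂rest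
  obtain ⟨hn₃l', hn₃m'⟩ := hsplit _ _ _ hn₃M
  -- the four key equations
  have hcast1 : ((l'' * (n₁ * n₂) : ℕ) : ZMod N) = 1 := by
    push_cast
    rw [hl''c, hn₁c, hn₂c, Units.val_mul]
    calc (c : ZMod N) * (c' : ZMod N) *
          (((c⁻¹ : (ZMod N)ˣ) : ZMod N) * ((c'⁻¹ : (ZMod N)ˣ) : ZMod N))
        = ((c : ZMod N) * ((c⁻¹ : (ZMod N)ˣ) : ZMod N)) *
          ((c' : ZMod N) * ((c'⁻¹ : (ZMod N)ˣ) : ZMod N)) := by ring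
      _ = 1 := by rw [hunit c, hunit c', one_mul]
  have hcast2 : (((l * m') * (n₁ * n₂) : ℕ) : ZMod N) = 1 := by
    push_cast
    rw [hlc, hm'c, hn₁c, hn₂c]
    calc (c : ZMod N) * (c' : ZMod N) *
          (((c⁻¹ : (ZMod N)ˣ) : ZMod N) * ((c'⁻¹ : (ZMod N)ˣ) : ZMod N))
        = ((c : ZMod N) * ((c⁻¹ : (ZMod N)ˣ) : ZMod N)) *
          ((c' : ZMod N) * ((c'⁻¹ : (ZMod N)ˣ) : ZMod N)) := by ring
      _ = 1 := by rw [hunit c, hunit c', one_mul]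
  have hcast3 : ((l' * n₃ : ℕ) : ZMod N) = 1 := by
    push_cast; rw [hl'c, hn₃c]; exact hunit c'
  have hcast4 : ((m' * n₃ : ℕ) : ZMod N) = 1 := by
    push_cast; rw [hm'c, hn₃c]; exact hunit c'
  have hco1 : Nat.Coprime l'' (n₁ * n₂) := Nat.Coprime.mul_right hn₁l''.symm hn₂l''.symm
  have hco2 : Nat.Coprime (l * m') (n₁ * n₂) := Nat.Coprime.mul_right hn₁lm'.symm hn₂lm'.symm
  have hco12 : Nat.Coprime n₁ n₂ := hn₂n₁.symm
  have E1 : f l'' * (f n₁ * f n₂) = g l'' * (g n₁ * g n₂) := by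
    have := key l'' (n₁ * n₂) hco1 hcast1
    rwa [hfmul n₁ n₂ hco12, hgmul n₁ n₂ hco12] at this
  have E2 : (f l * f m') * (f n₁ * f n₂) = (g l * g m') * (g n₁ * g n₂) := by
    have := key (l * m') (n₁ * n₂) hco2 hcast2
    rwa [hfmul n₁ n₂ hco12, hgmul n₁ n₂ hco12, hfmul l m' hm'l.symm,
      hgmul l m' hm'l.symm] at this
  have E3 : f l' * f n₃ = g l' * g n₃ := key l' n₃ hn₃l'.symm hcast3
  have E4 : f m' * f n₃ = g m' * g n₃ := key m' n₃ hn₃m'.symm hcast4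
  have hnf : f n₁ * f n₂ ≠ 0 := mul_ne_zero hfn₁ hfn₂
  have hgm' : g m' ≠ 0 := by
    have h0 : g m' * g n₃ ≠ 0 := E4 ▸ mul_ne_zero hfm' hfn₃
    exact left_ne_zero_of_mul h0
  have hstar : f l'' * (g l * g m') = g l'' * (f l * f m') := by
    apply mul_right_cancel₀ hnf
    linear_combination (g l * g m') * E1 - g l'' * E2
  have hstar2 : f l' * g m' = g l' * f m' := by
    apply mul_right_cancel₀ hfn₃
    linear_combination g m' * E3 - g l' * E4
  have hG : g l'' * (f l * f l') = f l'' * (g l * g l') := by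
    apply mul_right_cancel₀ hgm'
    linear_combination (-(g l')) * hstar + (g l'' * f l) * hstar2
  rw [div_mul_div_comm, div_eq_div_iff hfl'' (mul_ne_zero hfl hfl')]
  linear_combination hG
end
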